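/- Let n = 2 and let (p,q,(u,v)) be a normal extremal on [t0,t1] (λ > 0) that is neither u-singular nor v-singular on any nondegenerate subinterval, and such that Δ_A(q(t)) ≠ 0 and f(q(t)) := −Δ_Bu(q(t))/Δ_A(q(t)) > 0 for all t ∈ [t0,t1]. Then φ_u has at most one zero in [t0,t1]; moreover if φ_u(τ) = 0 then φ_u(t) < 0 for all t ∈ [t0,τ) and φ_u(t) > 0 for all t ∈ (τ,t1] (so the only possible u-switching is from −a to a). -/

import Mathlib

open MeasureTheory Set

noncomputable section

/-- Euclidean dot product on `ℝⁿ`. -/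
def dotp {n : ℕ} (p q : Fin n → ℝ) : ℝ := ∑ i, p i * q i

/-- Lie bracket `[F, G](x) = DG(x) F(x) - DF(x) G(x)`. -/
def lieBracket {n : ℕ} (F G : (Fin n → ℝ) → (Fin n → ℝ)) (x : Fin n → ℝ) : Fin n → ℝ :=
  fderiv ℝ G x (F x) - fderiv ℝ F x (G x)

/-- Determinant of two vectors of `ℝ²`. -/
def det2 (x y : Fin 2 → ℝ) : ℝ := x 0 * y 1 - x 1 * y 0

/-- An admissible pair on `[t0, t1]` for the control-affine system
`q' = v F(q) + u G(q)` with controls in `U = [-a, a] × [b, c]`. -/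
def AdmissiblePair {n : ℕ} (F G : (Fin n → ℝ) → (Fin n → ℝ)) (a b c t0 t1 : ℝ)
    (q : ℝ → Fin n → ℝ) (u v : ℝ → ℝ) : Prop :=
  Measurable u ∧ Measurable v ∧
  (∀ᵐ t ∂volume, t ∈ Icc t0 t1 → u t ∈ Icc (-a) a ∧ v t ∈ Icc b c) ∧
  (∃ K, LipschitzOnWith K q (Icc t0 t1)) ∧
  (∀ᵐ t ∂volume, t ∈ Icc t0 t1 →
    HasDerivWithinAt q (fun i => v t * F (q t) i + u t * G (q t) i) (Icc t0 t1) t)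

/-- An extremal (in the sense of the Pontryagin Maximum Principle) of the control-affine
system `q' = v F(q) + u G(q)` with controls in `U = [-a, a] × [b, c]`, with multiplier
`lam ≥ 0`: the covector `p` is Lipschitz, never vanishing, satisfies the adjoint
equation `p' = -(v (DF)ᵀ + u (DG)ᵀ) p` a.e., the maximality condition a.e., and the
Hamiltonian is constant equal to `lam` a.e. -/
def IsExtremal {n : ℕ} (F G : (Fin n → ℝ) → (Fin n → ℝ)) (a b c t0 t1 : ℝ)
    (p q : ℝ → Fin n → ℝ) (u v : ℝ → ℝ) (lam : ℝ) : Prop :=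
  AdmissiblePair F G a b c t0 t1 q u v ∧
  (∃ K, LipschitzOnWith K p (Icc t0 t1)) ∧
  (∀ t ∈ Icc t0 t1, p t ≠ 0) ∧
  (∀ᵐ t ∂volume, t ∈ Icc t0 t1 →
    HasDerivWithinAt p
      (fun i => -(v t * dotp (p t) (fderiv ℝ F (q t) (Pi.single i 1)) +
                  u t * dotp (p t) (fderiv ℝ G (q t) (Pi.single i 1))))
      (Icc t0 t1) t) ∧
  0 ≤ lam ∧
  (∀ᵐ t ∂volume, t ∈ Icc t0 t1 →
    (∀ w ∈ Icc (-a) a, ∀ z ∈ Icc b c,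
      z * dotp (p t) (F (q t)) + w * dotp (p t) (G (q t)) ≤
      v t * dotp (p t) (F (q t)) + u t * dotp (p t) (G (q t))) ∧
    v t * dotp (p t) (F (q t)) + u t * dotp (p t) (G (q t)) = lam)

open Filter

lemma growth_aux {φ : ℝ → ℝ} {s t δ K : ℝ} (hK : 0 ≤ K) (hst : s ≤ t)
    (hφc : ContinuousOn φ (Icc s t))
    (hlip : ∀ x ∈ Icc s t, ∀ y ∈ Icc s t, |φ x - φ y| ≤ K * |x - y|)
    {E : Set ℝ} (hE : volume (Icc s t \ E) = 0)
    {d : ℝ → ℝ}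
    (hd : ∀ x ∈ E ∩ Icc s t, HasDerivWithinAt φ (d x) (Icc s t) x)
    (hδ : ∀ x ∈ E ∩ Icc s t, δ ≤ d x) :
    δ * (t - s) ≤ φ t - φ s := by
  set C : ℝ := K + |δ| + 1 with hC
  have hCpos : 0 < C := by positivity
  -- key claim with two epsilons
  have key : ∀ ε1 > (0:ℝ), ∀ ε2 > (0:ℝ),
      δ * (t - s) ≤ φ t - φ s + ε1 * (t - s) + C * ε2 := by
    intro ε1 hε1 ε2 hε2
    obtain ⟨U, hNU, hUopen, hUvol⟩ :=
      exists_isOpen_lt_of_lt (Icc s t \ E) (ENNReal.ofReal ε2)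
        (by rw [hE]; exact ENNReal.ofReal_pos.2 hε2)
    have hUfin : ∀ x : ℝ, volume (U ∩ Ioo s x) ≠ ⊤ :=
      fun x => ne_top_of_lt (lt_of_le_of_lt (measure_mono inter_subset_left)
        (hUvol.trans_le le_top))
    set m : ℝ → ℝ := fun x => (volume (U ∩ Ioo s x)).toReal with hm
    have hmono : ∀ {x y : ℝ}, x ≤ y → m x ≤ m y := by
      intro x y hxy
      exact ENNReal.toReal_le_toReal (hUfin x) (hUfin y) |>.2
        (measure_mono (inter_subset_inter_right _ (Ioo_subset_Ioo le_rfl hxy)))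
    have hmlip : ∀ {x y : ℝ}, x ≤ y → m y ≤ m x + (y - x) := by
      intro x y hxy
      have hsub : U ∩ Ioo s y ⊆ (U ∩ Ioo s x) ∪ Ico x y := by
        rintro z ⟨hzU, hz1, hz2⟩
        rcases lt_or_ge z x with h | h
        · exact Or.inl ⟨hzU, hz1, h⟩
        · exact Or.inr ⟨h, hz2⟩
      have h1 : volume (U ∩ Ioo s y) ≤ volume (U ∩ Ioo s x) + ENNReal.ofReal (y - x) := by
        refine (measure_mono hsub).trans ?_
        refine (measure_union_le _ _).trans ?_
        rw [Real.volume_Ico]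
      calc m y ≤ (volume (U ∩ Ioo s x) + ENNReal.ofReal (y - x)).toReal :=
            ENNReal.toReal_le_toReal (hUfin y)
              (by simp [ENNReal.add_ne_top, hUfin x, ENNReal.ofReal_ne_top]) |>.2 h1
        _ = m x + (y - x) := by
            rw [ENNReal.toReal_add (hUfin x) ENNReal.ofReal_ne_top,
              ENNReal.toReal_ofReal (by linarith)]
    have hmcont : Continuous m := by
      refine LipschitzWith.continuous (K := 1) (LipschitzWith.of_dist_le_mul ?_)
      intro x y
      rw [Real.dist_eq, Real.dist_eq, NNReal.coe_one, one_mul]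
      rcases le_total x y with h | h
      · rw [abs_sub_comm (m x), abs_of_nonneg (by linarith [hmono h]),
          abs_of_nonpos (by linarith)]
        have := hmlip h; linarith
      · rw [abs_of_nonneg (by linarith [hmono h]), abs_of_nonneg (by linarith)]
        have := hmlip h; linarith
    have hms : m s = 0 := by simp [hm]
    have hmε2 : ∀ x, m x ≤ ε2 := by
      intro x
      exact ENNReal.toReal_le_of_le_ofReal hε2.le
        ((measure_mono inter_subset_left).trans hUvol.le)
    -- fencing
    set f : ℝ → ℝ := fun x => -φ x - C * m x with hfdef
    have hfc : ContinuousOn f (Icc s t) :=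
      hφc.neg.sub ((continuous_const.mul hmcont).continuousOn)
    have main : ∀ ⦃x⦄, x ∈ Icc s t → f x ≤ f s + (-δ + ε1) * (x - s) := by
      refine image_le_of_liminf_slope_right_le_deriv_boundary (B' := fun _ => -δ + ε1) hfc
        (by simp) ?_ ?_ ?_
      · exact continuousOn_const.add
          (continuousOn_const.mul ((continuousOn_id).sub continuousOn_const))
      · intro x _
        have h : HasDerivWithinAt (fun y => f s + (-δ + ε1) * (y - s)) ((-δ + ε1) * 1) (Ici x) x :=
          (((hasDerivWithinAt_id x (Ici x)).sub_const s).const_mul (-δ + ε1)).const_add (f s)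
        simpa using h
      · intro x hx r hr
        have hr' : -δ + ε1 < r := hr
        by_cases hxE : x ∈ E
        · -- derivative point
          have hder : HasDerivWithinAt φ (d x) (Ici x) x :=
            (hd x ⟨hxE, hx.1, hx.2.le⟩).mono_of_mem_nhdsWithin (Icc_mem_nhdsGE_of_mem hx)
          have h0 := hδ x ⟨hxE, hx.1, hx.2.le⟩
          have hdlt : -d x < r := by linarith
          have hfreq := hder.neg.liminf_right_slope_le hdlt
          refine (hfreq.and_eventually (eventually_mem_nhdsWithin)).mono ?_
          rintro z ⟨hz1, hz2⟩
          have hzx : x < z := hz2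
          have : slope f x z ≤ slope (fun y => -φ y) x z := by
            rw [slope_def_field, slope_def_field, hfdef]
            have hnum : (-φ z - C * m z) - (-φ x - C * m x) ≤ (-φ z) - (-φ x) := by
              have := hmono hzx.le
              nlinarith [hCpos]
            exact div_le_div_of_nonneg_right hnum (by linarith) |>.trans_eq rfl
          exact lt_of_le_of_lt this hz1
        · -- point in U
          have hxU : x ∈ U := hNU ⟨⟨hx.1, hx.2.le⟩, hxE⟩
          obtain ⟨η, hη, hball⟩ := Metric.isOpen_iff.1 hUopen x hxU
          have hmem : Ioo x (min (x + η) t) ∈ nhdsWithin x (Ioi x) :=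
            Ioo_mem_nhdsGT_of_mem ⟨le_rfl, lt_min (by linarith) hx.2⟩
          refine Filter.Eventually.frequently (Filter.eventually_of_mem hmem ?_)
          intro z hz
          have hzx : x < z := hz.1
          have hzt : z ≤ t := le_of_lt (lt_of_lt_of_le hz.2 (min_le_right _ _))
          have hzU : Ioo x z ⊆ U := by
            intro y hy
            apply hball
            rw [Metric.mem_ball, Real.dist_eq, abs_of_pos (by linarith [hy.1])]
            have : z ≤ x + η := le_of_lt (lt_of_lt_of_le hz.2 (min_le_left _ _))
            linarith [hy.2]
          -- m z - m x ≥ z - x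
          have hmgrow : m x + (z - x) ≤ m z := by
            have hdisj : Disjoint (U ∩ Ioo s x) (Ioo x z) := by
              refine Set.disjoint_left.2 ?_
              rintro y ⟨_, _, hy2⟩ ⟨hy3, _⟩
              exact absurd hy3 (not_lt.2 hy2.le)
            have hsub : (U ∩ Ioo s x) ∪ Ioo x z ⊆ U ∩ Ioo s z := by
              rintro y (⟨h1, h2, h3⟩ | ⟨h1, h2⟩)
              · exact ⟨h1, h2, h3.trans hzx⟩
              · exact ⟨hzU ⟨h1, h2⟩, lt_of_le_of_lt hx.1 h1, h2⟩
            have hmm := measure_mono (μ := volume) hsub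
            rw [measure_union hdisj measurableSet_Ioo] at hmm
            have h2 : volume (U ∩ Ioo s x) + ENNReal.ofReal (z - x) ≤ volume (U ∩ Ioo s z) := by
              rwa [Real.volume_Ioo] at hmm
            have := ENNReal.toReal_le_toReal
              (by simp [ENNReal.add_ne_top, hUfin x, ENNReal.ofReal_ne_top]) (hUfin z) |>.2 h2
            rwa [ENNReal.toReal_add (hUfin x) ENNReal.ofReal_ne_top,
              ENNReal.toReal_ofReal (by linarith)] at this
          -- slope bound
          have hlipz : |φ z - φ x| ≤ K * (z - x) := by
            have := hlip z ⟨le_trans hx.1 hzx.le, hzt⟩ x ⟨hx.1, hx.2.le⟩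
            rwa [abs_of_pos (show (0:ℝ) < z - x by linarith)] at this
          rw [slope_def_field]
          have hnum : f z - f x ≤ (K - C) * (z - x) := by
            have hfz : f z = -φ z - C * m z := rfl
            have hfx : f x = -φ x - C * m x := rfl
            rw [hfz, hfx]
            have h1 : -φ z + φ x ≤ K * (z - x) := by
              have h2 := (abs_le.1 hlipz).1
              linarith
            nlinarith [hmgrow]
          have hdiv : (f z - f x) / (z - x) ≤ K - C := by
            rw [div_le_iff₀ (show (0:ℝ) < z - x by linarith)]
            linarith [hnum]
          have hKC : K - C < r := by
            have h1 : δ ≤ |δ| := le_abs_self δ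
            have h3 : K - C = -|δ| - 1 := by rw [hC]; ring
            linarith
          linarith
    have hmain := main (right_mem_Icc.2 hst)
    have hft : f t = -φ t - C * m t := rfl
    have hfs : f s = -φ s - C * m s := rfl
    rw [hft, hfs, hms] at hmain
    nlinarith [hmε2 t, hmono hst, hms, hCpos, mul_le_mul_of_nonneg_left (hmε2 t) hCpos.le]
  -- conclude
  refine le_of_forall_pos_le_add fun ε hε => ?_
  have h1 : (0:ℝ) < ε / (2 * (t - s + 1)) := div_pos hε (by linarith)
  have h2 : (0:ℝ) < ε / (2 * C) := div_pos hε (by linarith)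
  have := key _ h1 _ h2
  have e1 : ε / (2 * (t - s + 1)) * (t - s) ≤ ε / 2 := by
    rw [div_mul_eq_mul_div, div_le_div_iff₀ (by linarith) (by norm_num)]
    nlinarith
  have e2 : C * (ε / (2 * C)) = ε / 2 := by
    field_simp [hCpos.ne']
  linarith

lemma dotp_cramer (x y z w : Fin 2 → ℝ) (h : det2 x y ≠ 0) :
    dotp w z = (det2 z y / det2 x y) * dotp w x + (det2 x z / det2 x y) * dotp w y := by
  simp only [dotp, det2, Fin.sum_univ_two] at *
  rw [div_mul_eq_mul_div, div_mul_eq_mul_div, ← add_div, eq_div_iff h]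
  ring

lemma dotp_clm (p w : Fin 2 → ℝ) (L : (Fin 2 → ℝ) →L[ℝ] (Fin 2 → ℝ)) :
    dotp p (L w) = w 0 * dotp p (L (Pi.single 0 1)) + w 1 * dotp p (L (Pi.single 1 1)) := by
  have hw : L w = w 0 • L (Pi.single 0 1) + w 1 • L (Pi.single 1 1) := by
    rw [← _root_.map_smul, ← _root_.map_smul, ← map_add]
    congr 1
    funext i
    fin_cases i <;> simp
  simp only [dotp, Fin.sum_univ_two, hw, Pi.add_apply, Pi.smul_apply, smul_eq_mul]
  ring

lemma hasDeriv_dotp_comp {G : (Fin 2 → ℝ) → (Fin 2 → ℝ)} (hG : ContDiff ℝ (⊤ : ℕ∞) G)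
    {s : Set ℝ} {t : ℝ} {p q : ℝ → Fin 2 → ℝ} {p' q' : Fin 2 → ℝ}
    (hp : HasDerivWithinAt p p' s t) (hq : HasDerivWithinAt q q' s t) :
    HasDerivWithinAt (fun τ => dotp (p τ) (G (q τ)))
      (dotp p' (G (q t)) + dotp (p t) (fderiv ℝ G (q t) q')) s t := by
  have hg : HasDerivWithinAt (fun τ => G (q τ)) (fderiv ℝ G (q t) q') s t :=
    ((hG.differentiable (by simp) (q t)).hasFDerivAt).comp_hasDerivWithinAt t hq
  have coord : ∀ (f : ℝ → Fin 2 → ℝ) (f' : Fin 2 → ℝ), HasDerivWithinAt f f' s t →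
      ∀ i : Fin 2, HasDerivWithinAt (fun τ => f τ i) (f' i) s t := fun f f' hf i =>
    (ContinuousLinearMap.proj (R := ℝ) (φ := fun _ : Fin 2 => ℝ) i).hasFDerivAt.comp_hasDerivWithinAt t hf
  have hp0 := coord p p' hp 0
  have hp1 := coord p p' hp 1
  have hg0 := coord _ _ hg 0
  have hg1 := coord _ _ hg 1
  have h := (hp0.mul hg0).add (hp1.mul hg1)
  have heq : (fun τ => dotp (p τ) (G (q τ))) =
      fun τ => p τ 0 * G (q τ) 0 + p τ 1 * G (q τ) 1 := by
    funext τ; simp [dotp, Fin.sum_univ_two]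
  rw [heq]
  refine HasDerivWithinAt.congr_deriv h ?_
  simp only [dotp, Fin.sum_univ_two]
  ring

lemma aux_contOn_dotp {s : Set ℝ} {f g : ℝ → Fin 2 → ℝ}
    (hf : ContinuousOn f s) (hg : ContinuousOn g s) :
    ContinuousOn (fun t => dotp (f t) (g t)) s := by
  simp only [dotp, Fin.sum_univ_two]
  exact (((continuous_apply 0).comp_continuousOn hf).mul
      ((continuous_apply 0).comp_continuousOn hg)).add
    (((continuous_apply 1).comp_continuousOn hf).mul
      ((continuous_apply 1).comp_continuousOn hg))

lemma aux_contOn_det2 {s : Set ℝ} {f g : ℝ → Fin 2 → ℝ}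
    (hf : ContinuousOn f s) (hg : ContinuousOn g s) :
    ContinuousOn (fun t => det2 (f t) (g t)) s := by
  simp only [det2]
  exact (((continuous_apply 0).comp_continuousOn hf).mul
      ((continuous_apply 1).comp_continuousOn hg)).sub
    (((continuous_apply 1).comp_continuousOn hf).mul
      ((continuous_apply 0).comp_continuousOn hg))

lemma aux_abs_dotp_diff {w w' z z' : Fin 2 → ℝ} {Mw Mz D1 D2 : ℝ}
    (hw : ∀ i, |w' i| ≤ Mw) (hz : ∀ i, |z i| ≤ Mz)
    (h1 : ∀ i, |w i - w' i| ≤ D1) (h2 : ∀ i, |z i - z' i| ≤ D2) :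
    |dotp w z - dotp w' z'| ≤ 2 * Mz * D1 + 2 * Mw * D2 := by
  have hMz : 0 ≤ Mz := le_trans (abs_nonneg _) (hz 0)
  have hMw : 0 ≤ Mw := le_trans (abs_nonneg _) (hw 0)
  have hD1 : 0 ≤ D1 := le_trans (abs_nonneg _) (h1 0)
  have hD2 : 0 ≤ D2 := le_trans (abs_nonneg _) (h2 0)
  have e : dotp w z - dotp w' z' =
      (w 0 - w' 0) * z 0 + (w 1 - w' 1) * z 1 +
        (w' 0 * (z 0 - z' 0) + w' 1 * (z 1 - z' 1)) := by
    simp only [dotp, Fin.sum_univ_two]; ring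
  rw [e]
  have b1 : |(w 0 - w' 0) * z 0| ≤ D1 * Mz := by
    rw [abs_mul]; exact mul_le_mul (h1 0) (hz 0) (abs_nonneg _) hD1
  have b2 : |(w 1 - w' 1) * z 1| ≤ D1 * Mz := by
    rw [abs_mul]; exact mul_le_mul (h1 1) (hz 1) (abs_nonneg _) hD1
  have b3 : |w' 0 * (z 0 - z' 0)| ≤ Mw * D2 := by
    rw [abs_mul]; exact mul_le_mul (hw 0) (h2 0) (abs_nonneg _) hMw
  have b4 : |w' 1 * (z 1 - z' 1)| ≤ Mw * D2 := by
    rw [abs_mul]; exact mul_le_mul (hw 1) (h2 1) (abs_nonneg _) hMw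
  calc |(w 0 - w' 0) * z 0 + (w 1 - w' 1) * z 1 +
        (w' 0 * (z 0 - z' 0) + w' 1 * (z 1 - z' 1))|
      ≤ |(w 0 - w' 0) * z 0 + (w 1 - w' 1) * z 1| +
        |w' 0 * (z 0 - z' 0) + w' 1 * (z 1 - z' 1)| := abs_add_le _ _
    _ ≤ (|(w 0 - w' 0) * z 0| + |(w 1 - w' 1) * z 1|) +
        (|w' 0 * (z 0 - z' 0)| + |w' 1 * (z 1 - z' 1)|) :=
        add_le_add (abs_add_le _ _) (abs_add_le _ _)
    _ ≤ 2 * Mz * D1 + 2 * Mw * D2 := by linarith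

lemma aux_ae_nonneg_everywhere {g : ℝ → ℝ} {t0 t1 : ℝ} (h01 : t0 < t1)
    (hg : ContinuousOn g (Icc t0 t1))
    (hae : ∀ᵐ t ∂volume, t ∈ Icc t0 t1 → 0 ≤ g t) :
    ∀ t ∈ Icc t0 t1, 0 ≤ g t := by
  intro x hx
  by_contra hcc; push_neg at hcc
  have hct := hg x hx; rw [Metric.continuousWithinAt_iff] at hct
  obtain ⟨η, hη, hball⟩ := hct (-(g x)) (by linarith)
  have hlr : max t0 (x - η) < min t1 (x + η) := by
    apply max_lt
    · exact lt_min h01 (by linarith [hx.1])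
    · exact lt_min (by linarith [hx.2]) (by linarith)
  have hsub : Ioo (max t0 (x - η)) (min t1 (x + η)) ⊆
      {t | ¬ (t ∈ Icc t0 t1 → 0 ≤ g t)} := by
    intro y hy
    have hyI : y ∈ Icc t0 t1 :=
      ⟨le_trans (le_max_left _ _) hy.1.le, le_trans hy.2.le (min_le_left _ _)⟩
    have hyd : dist y x < η := by
      rw [Real.dist_eq, abs_lt]
      constructor
      · have h3 := le_max_right t0 (x - η); have := hy.1; linarith
      · have h3 := min_le_right t1 (x + η); have := hy.2; linarith
    have hb := hball hyI hyd; rw [Real.dist_eq] at hb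
    have h2 := (abs_lt.1 hb).2
    simp only [mem_setOf_eq]
    intro himp
    exact absurd (himp hyI) (by linarith)
  have h0 := ae_iff.1 hae
  have hnull := measure_mono_null hsub h0
  rw [Real.volume_Ioo, ENNReal.ofReal_eq_zero] at hnull
  linarith

set_option maxHeartbeats 1600000 in

/-- Along a normal, non-singular extremal of a two-input control-affine system on `ℝ²`
with `Δ_A(q) ≠ 0` and `f(q) = -Δ_Bu(q)/Δ_A(q) > 0`, the switching function `φ_u` has
at most one zero, and at such a zero it passes from negative to positive values
(so the only possible `u`-switching is from `-a` to `a`). -/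
theorem at_most_one_u_switch_f_pos
    (F G : (Fin 2 → ℝ) → (Fin 2 → ℝ))
    (hF : ContDiff ℝ (⊤ : ℕ∞) F) (hG : ContDiff ℝ (⊤ : ℕ∞) G)
    (a b c : ℝ) (ha : 0 < a) (hb : 0 < b) (hbc : b ≤ c)
    (t0 t1 : ℝ) (ht : t0 ≤ t1)
    (p q : ℝ → Fin 2 → ℝ) (u v : ℝ → ℝ) (lam : ℝ)
    (hext : IsExtremal F G a b c t0 t1 p q u v lam) (hnormal : 0 < lam)
    (hns : ∀ s0 s1, t0 ≤ s0 → s0 < s1 → s1 ≤ t1 →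
      (¬ ∀ t ∈ Icc s0 s1, dotp (p t) (G (q t)) = 0) ∧
      (¬ ∀ t ∈ Icc s0 s1, dotp (p t) (F (q t)) = 0))
    (hA : ∀ t ∈ Icc t0 t1, det2 (F (q t)) (G (q t)) ≠ 0)
    (hf : ∀ t ∈ Icc t0 t1,
      0 < -det2 (G (q t)) (lieBracket F G (q t)) / det2 (F (q t)) (G (q t))) :
    (∀ τ ∈ Icc t0 t1, ∀ τ' ∈ Icc t0 t1,
      dotp (p τ) (G (q τ)) = 0 → dotp (p τ') (G (q τ')) = 0 → τ = τ') ∧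
    (∀ τ ∈ Icc t0 t1, dotp (p τ) (G (q τ)) = 0 →
      (∀ t ∈ Ico t0 τ, dotp (p t) (G (q t)) < 0) ∧
      (∀ t ∈ Ioc τ t1, 0 < dotp (p t) (G (q t)))) := by
  clear hns
  obtain ⟨⟨hu_meas, hv_meas, hbox, ⟨Kq, hqlip⟩, hqode⟩, ⟨Kp, hplip⟩, hpne, hpode, hlam0, hmax⟩ := hext
  rcases ht.lt_or_eq with h01 | h01
  swap
  · constructor
    · intro τ hτ τ' hτ' _ _
      have e1 : τ = t0 := le_antisymm (by linarith [hτ.2]) hτ.1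
      have e2 : τ' = t0 := le_antisymm (by linarith [hτ'.2]) hτ'.1
      rw [e1, e2]
    · intro τ hτ _
      constructor
      · intro t htI; exfalso; linarith [hτ.2, htI.1, htI.2]
      · intro t htI; exfalso; linarith [hτ.1, htI.1, htI.2]
  -- Notation and continuity
  have hc : (0:ℝ) < c := lt_of_lt_of_le hb hbc
  have hqc : ContinuousOn q (Icc t0 t1) := hqlip.continuousOn
  have hpc : ContinuousOn p (Icc t0 t1) := hplip.continuousOn
  have hGqc : ContinuousOn (fun t => G (q t)) (Icc t0 t1) :=
    hG.continuous.comp_continuousOn hqc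
  have hFqc : ContinuousOn (fun t => F (q t)) (Icc t0 t1) :=
    hF.continuous.comp_continuousOn hqc
  have hLB : Continuous (lieBracket F G) := by
    show Continuous fun x => fderiv ℝ G x (F x) - fderiv ℝ F x (G x)
    exact ((hG.continuous_fderiv (by simp)).clm_apply hF.continuous).sub
      ((hF.continuous_fderiv (by simp)).clm_apply hG.continuous)
  have hBvc : ContinuousOn (fun t => lieBracket F G (q t)) (Icc t0 t1) :=
    hLB.comp_continuousOn hqc
  have hφc : ContinuousOn (fun t => dotp (p t) (G (q t))) (Icc t0 t1) :=
    aux_contOn_dotp hpc hGqc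
  have hψc : ContinuousOn (fun t => dotp (p t) (F (q t))) (Icc t0 t1) :=
    aux_contOn_dotp hpc hFqc
  set αf : ℝ → ℝ :=
    fun t => det2 (lieBracket F G (q t)) (G (q t)) / det2 (F (q t)) (G (q t)) with hαdef
  set βf : ℝ → ℝ :=
    fun t => det2 (F (q t)) (lieBracket F G (q t)) / det2 (F (q t)) (G (q t)) with hβdef
  have hαpos : ∀ t ∈ Icc t0 t1, 0 < αf t := by
    intro t ht
    have h := hf t ht
    have e : -det2 (G (q t)) (lieBracket F G (q t)) =
        det2 (lieBracket F G (q t)) (G (q t)) := by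
      simp only [det2]; ring
    show 0 < det2 (lieBracket F G (q t)) (G (q t)) / det2 (F (q t)) (G (q t))
    rwa [e] at h
  have hcram : ∀ t ∈ Icc t0 t1, dotp (p t) (lieBracket F G (q t)) =
      αf t * dotp (p t) (F (q t)) + βf t * dotp (p t) (G (q t)) :=
    fun t ht => dotp_cramer (F (q t)) (G (q t)) (lieBracket F G (q t)) (p t) (hA t ht)
  have hαfc : ContinuousOn αf (Icc t0 t1) :=
    (aux_contOn_det2 hBvc hGqc).div (aux_contOn_det2 hFqc hGqc) hA
  have hβfc : ContinuousOn βf (Icc t0 t1) :=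
    (aux_contOn_det2 hFqc hBvc).div (aux_contOn_det2 hFqc hGqc) hA
  -- uniform bounds
  obtain ⟨z0, hz0I, hz0min⟩ := isCompact_Icc.exists_isMinOn (nonempty_Icc.2 ht) hαfc
  have hα₀pos : 0 < αf z0 := hαpos z0 hz0I
  have hα₀le : ∀ t ∈ Icc t0 t1, αf z0 ≤ αf t := fun t htI => isMinOn_iff.1 hz0min t htI
  obtain ⟨Mβ0, hMβ0⟩ := isCompact_Icc.exists_bound_of_continuousOn hβfc
  have hMβnn : (0:ℝ) ≤ max Mβ0 0 := le_max_right _ _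
  have hMβ : ∀ t ∈ Icc t0 t1, |βf t| ≤ max Mβ0 0 := by
    intro t htI
    calc |βf t| = ‖βf t‖ := (Real.norm_eq_abs _).symm
      _ ≤ Mβ0 := hMβ0 t htI
      _ ≤ max Mβ0 0 := le_max_left _ _
  obtain ⟨Mp0, hMp0⟩ := isCompact_Icc.exists_bound_of_continuousOn hpc
  obtain ⟨MG0, hMG0⟩ := isCompact_Icc.exists_bound_of_continuousOn hGqc
  have hMpnn : (0:ℝ) ≤ max Mp0 0 := le_max_right _ _
  have hMGnn : (0:ℝ) ≤ max MG0 0 := le_max_right _ _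
  have hMp : ∀ t ∈ Icc t0 t1, ∀ i, |p t i| ≤ max Mp0 0 := by
    intro t htI i
    calc |p t i| = ‖p t i‖ := (Real.norm_eq_abs _).symm
      _ ≤ ‖p t‖ := norm_le_pi_norm (p t) i
      _ ≤ Mp0 := hMp0 t htI
      _ ≤ max Mp0 0 := le_max_left _ _
  have hMG : ∀ t ∈ Icc t0 t1, ∀ i, |G (q t) i| ≤ max MG0 0 := by
    intro t htI i
    calc |G (q t) i| = ‖G (q t) i‖ := (Real.norm_eq_abs _).symm
      _ ≤ ‖G (q t)‖ := norm_le_pi_norm (G (q t)) i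
      _ ≤ MG0 := hMG0 t htI
      _ ≤ max MG0 0 := le_max_left _ _
  -- Lipschitz bound for G along q
  obtain ⟨R, hR⟩ := (isCompact_Icc.image_of_continuousOn hqc).isBounded.subset_closedBall 0
  obtain ⟨CG0, hCG0⟩ := (isCompact_closedBall (0 : Fin 2 → ℝ) R).exists_bound_of_continuousOn
    ((hG.continuous_fderiv (by simp)).continuousOn)
  have hCGnn : (0:ℝ) ≤ max CG0 0 := le_max_right _ _
  have hGlipOn : ∀ x ∈ Icc t0 t1, ∀ y ∈ Icc t0 t1,
      ‖G (q x) - G (q y)‖ ≤ max CG0 0 * ‖q x - q y‖ := by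
    intro x hx y hy
    exact (convex_closedBall (0 : Fin 2 → ℝ) R).norm_image_sub_le_of_norm_fderiv_le
      (fun z _ => hG.differentiable (by simp) z)
      (fun z hz => le_trans (hCG0 z hz) (le_max_left _ _))
      (hR ⟨y, hy, rfl⟩) (hR ⟨x, hx, rfl⟩)
  -- Lipschitz-type bound for φ
  set Kφ : ℝ := 2 * max MG0 0 * (Kp : ℝ) + 2 * max Mp0 0 * (max CG0 0 * (Kq : ℝ)) with hKφdef
  have hKφ0 : 0 ≤ Kφ := by
    rw [hKφdef]
    have := Kp.coe_nonneg; have := Kq.coe_nonneg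
    positivity
  have hφlip : ∀ x ∈ Icc t0 t1, ∀ y ∈ Icc t0 t1,
      |dotp (p x) (G (q x)) - dotp (p y) (G (q y))| ≤ Kφ * |x - y| := by
    intro x hx y hy
    have h1 : ∀ i, |p x i - p y i| ≤ (Kp : ℝ) * |x - y| := by
      intro i
      calc |p x i - p y i| = dist (p x i) (p y i) := (Real.dist_eq _ _).symm
        _ ≤ dist (p x) (p y) := dist_le_pi_dist (p x) (p y) i
        _ ≤ Kp * dist x y := hplip.dist_le_mul x hx y hy
        _ = Kp * |x - y| := by rw [Real.dist_eq]
    have h2 : ∀ i, |G (q x) i - G (q y) i| ≤ max CG0 0 * (Kq : ℝ) * |x - y| := by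
      intro i
      have hcrd : |G (q x) i - G (q y) i| ≤ ‖G (q x) - G (q y)‖ := by
        have h := norm_le_pi_norm (G (q x) - G (q y)) i
        simpa [Real.norm_eq_abs] using h
      have hq' : ‖q x - q y‖ ≤ (Kq : ℝ) * |x - y| := by
        have h := hqlip.dist_le_mul x hx y hy
        rwa [dist_eq_norm, Real.dist_eq] at h
      calc |G (q x) i - G (q y) i| ≤ ‖G (q x) - G (q y)‖ := hcrd
        _ ≤ max CG0 0 * ‖q x - q y‖ := hGlipOn x hx y hy
        _ ≤ max CG0 0 * ((Kq : ℝ) * |x - y|) := mul_le_mul_of_nonneg_left hq' hCGnn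
        _ = max CG0 0 * (Kq : ℝ) * |x - y| := by ring
    have hd := aux_abs_dotp_diff (hMp y hy) (hMG x hx) h1 h2
    calc |dotp (p x) (G (q x)) - dotp (p y) (G (q y))|
        ≤ 2 * max MG0 0 * ((Kp : ℝ) * |x - y|) +
          2 * max Mp0 0 * (max CG0 0 * (Kq : ℝ) * |x - y|) := hd
      _ = Kφ * |x - y| := by rw [hKφdef]; ring
  -- the full-measure set of good points
  set E : Set ℝ := {t | t ∈ Icc t0 t1 →
    (HasDerivWithinAt q (fun i => v t * F (q t) i + u t * G (q t) i) (Icc t0 t1) t ∧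
     HasDerivWithinAt p
       (fun i => -(v t * dotp (p t) (fderiv ℝ F (q t) (Pi.single i 1)) +
                   u t * dotp (p t) (fderiv ℝ G (q t) (Pi.single i 1)))) (Icc t0 t1) t ∧
     (u t ∈ Icc (-a) a ∧ v t ∈ Icc b c) ∧
     v t * dotp (p t) (F (q t)) + u t * dotp (p t) (G (q t)) = lam)} with hEdef
  have hEae : ∀ᵐ t ∂volume, t ∈ E := by
    filter_upwards [hqode, hpode, hbox, hmax] with t h1 h2 h3 h4
    intro htI
    exact ⟨h1 htI, h2 htI, h3 htI, (h4 htI).2⟩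
  have hEnull : volume (Icc t0 t1 \ E) = 0 := by
    refine measure_mono_null (fun z hz => hz.2) ?_
    have := ae_iff.1 hEae
    exact this
  -- the derivative of φ at good points
  have hDeriv : ∀ t, t ∈ E → t ∈ Icc t0 t1 →
      HasDerivWithinAt (fun τ => dotp (p τ) (G (q τ)))
        (v t * dotp (p t) (lieBracket F G (q t))) (Icc t0 t1) t := by
    intro t htE htI
    obtain ⟨hq', hp', _, _⟩ := htE htI
    have h := hasDeriv_dotp_comp hG hp' hq'
    convert h using 1
    have e1 : dotp (p t) (fderiv ℝ G (q t) (fun i => v t * F (q t) i + u t * G (q t) i)) =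
        (v t * F (q t) 0 + u t * G (q t) 0) * dotp (p t) (fderiv ℝ G (q t) (Pi.single 0 1)) +
        (v t * F (q t) 1 + u t * G (q t) 1) * dotp (p t) (fderiv ℝ G (q t) (Pi.single 1 1)) :=
      dotp_clm (p t) (fun i => v t * F (q t) i + u t * G (q t) i) (fderiv ℝ G (q t))
    have e2 : dotp (p t) (fderiv ℝ G (q t) (F (q t))) =
        F (q t) 0 * dotp (p t) (fderiv ℝ G (q t) (Pi.single 0 1)) +
        F (q t) 1 * dotp (p t) (fderiv ℝ G (q t) (Pi.single 1 1)) :=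
      dotp_clm (p t) (F (q t)) (fderiv ℝ G (q t))
    have e3 : dotp (p t) (fderiv ℝ F (q t) (G (q t))) =
        G (q t) 0 * dotp (p t) (fderiv ℝ F (q t) (Pi.single 0 1)) +
        G (q t) 1 * dotp (p t) (fderiv ℝ F (q t) (Pi.single 1 1)) :=
      dotp_clm (p t) (G (q t)) (fderiv ℝ F (q t))
    have hsub : dotp (p t) (lieBracket F G (q t)) =
        dotp (p t) (fderiv ℝ G (q t) (F (q t))) -
        dotp (p t) (fderiv ℝ F (q t) (G (q t))) := by
      simp only [lieBracket, dotp, Fin.sum_univ_two, Pi.sub_apply]; ring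
    have e0 : dotp (fun i => -(v t * dotp (p t) (fderiv ℝ F (q t) (Pi.single i 1)) +
          u t * dotp (p t) (fderiv ℝ G (q t) (Pi.single i 1)))) (G (q t)) =
        -(v t * dotp (p t) (fderiv ℝ F (q t) (Pi.single 0 1)) +
          u t * dotp (p t) (fderiv ℝ G (q t) (Pi.single 0 1))) * G (q t) 0 +
        -(v t * dotp (p t) (fderiv ℝ F (q t) (Pi.single 1 1)) +
          u t * dotp (p t) (fderiv ℝ G (q t) (Pi.single 1 1))) * G (q t) 1 := by
      simp only [dotp, Fin.sum_univ_two]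
    rw [hsub, e0, e1, e2, e3]
    ring
  -- maximality inequality, everywhere by continuity
  have hIneq : ∀ t ∈ Icc t0 t1,
      lam ≤ c * max (dotp (p t) (F (q t))) 0 + a * |dotp (p t) (G (q t))| := by
    have hgc : ContinuousOn
        (fun t => c * max (dotp (p t) (F (q t))) 0 + a * |dotp (p t) (G (q t))| - lam)
        (Icc t0 t1) :=
      (((continuousOn_const.mul ((continuous_id.max continuous_const).comp_continuousOn hψc)).add
        (continuousOn_const.mul hφc.abs)).sub continuousOn_const)
    have hae : ∀ᵐ t ∂volume, t ∈ Icc t0 t1 →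
        0 ≤ c * max (dotp (p t) (F (q t))) 0 + a * |dotp (p t) (G (q t))| - lam := by
      filter_upwards [hbox, hmax] with t h3 h4 htI
      obtain ⟨hu, hv⟩ := h3 htI
      obtain ⟨-, heq⟩ := h4 htI
      have h1 : v t * dotp (p t) (F (q t)) ≤ c * max (dotp (p t) (F (q t))) 0 := by
        rcases le_total 0 (dotp (p t) (F (q t))) with hh | hh
        · rw [max_eq_left hh]
          exact mul_le_mul_of_nonneg_right hv.2 hh
        · rw [max_eq_right hh, mul_zero]
          exact mul_nonpos_of_nonneg_of_nonpos (by linarith [hv.1]) hh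
      have h2 : u t * dotp (p t) (G (q t)) ≤ a * |dotp (p t) (G (q t))| := by
        calc u t * dotp (p t) (G (q t)) ≤ |u t * dotp (p t) (G (q t))| := le_abs_self _
          _ = |u t| * |dotp (p t) (G (q t))| := abs_mul _ _
          _ ≤ a * |dotp (p t) (G (q t))| :=
            mul_le_mul_of_nonneg_right (abs_le.2 ⟨hu.1, hu.2⟩) (abs_nonneg _)
      linarith [heq]
    have h := aux_ae_nonneg_everywhere h01 hgc hae
    intro t htI
    linarith [h t htI]
  -- local crossing lemma
  have crossing : ∀ σ ∈ Icc t0 t1, dotp (p σ) (G (q σ)) = 0 →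
      ∃ r > (0:ℝ), ∃ δ > (0:ℝ),
        (∀ y ∈ Icc t0 t1, σ < y → y ≤ σ + r → δ * (y - σ) ≤ dotp (p y) (G (q y))) ∧
        (∀ x ∈ Icc t0 t1, x < σ → σ - r ≤ x → dotp (p x) (G (q x)) ≤ -(δ * (σ - x))) := by
    intro σ hσ hφσ
    have hψσ : lam / c ≤ dotp (p σ) (F (q σ)) := by
      have h := hIneq σ hσ
      rw [hφσ] at h
      simp only [abs_zero, mul_zero, add_zero] at h
      rcases le_total 0 (dotp (p σ) (F (q σ))) with hh | hh
      · rw [max_eq_left hh] at h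
        rw [div_le_iff₀ hc]
        linarith
      · rw [max_eq_right hh, mul_zero] at h
        linarith
    have hκpos : 0 < αf z0 * (lam / (2 * c)) :=
      mul_pos hα₀pos (div_pos hnormal (by linarith))
    set κ : ℝ := αf z0 * (lam / (2 * c)) with hκdef
    set ρ : ℝ := κ / (2 * (max Mβ0 0 + 1)) with hρdef
    have hρpos : 0 < ρ := div_pos hκpos (by linarith)
    set δ : ℝ := b * (κ / 2) with hδdef
    have hδpos : 0 < δ := mul_pos hb (by linarith)
    have hψct := hψc σ hσ
    rw [Metric.continuousWithinAt_iff] at hψct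
    obtain ⟨r1, hr1, hψball⟩ := hψct (lam / (2 * c)) (div_pos hnormal (by linarith))
    have hφct := hφc σ hσ
    rw [Metric.continuousWithinAt_iff] at hφct
    obtain ⟨r2, hr2, hφball⟩ := hφct ρ hρpos
    set r : ℝ := min r1 r2 / 2 with hrdef
    have hrpos : 0 < r := by
      have := lt_min hr1 hr2
      rw [hrdef]; positivity
    have hrlt : r < min r1 r2 := by
      have := lt_min hr1 hr2
      rw [hrdef]; linarith
    have hwin : ∀ t ∈ Icc t0 t1, |t - σ| ≤ r →
        lam / (2 * c) ≤ dotp (p t) (F (q t)) ∧ |dotp (p t) (G (q t))| ≤ ρ := by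
      intro t htI htr
      have hdist : dist t σ < min r1 r2 := by
        rw [Real.dist_eq]; linarith [htr, hrlt]
      constructor
      · have h := hψball htI (hdist.trans_le (min_le_left _ _))
        simp only [Real.dist_eq] at h
        have h2 := (abs_lt.1 h).1
        have h3 : lam / (2 * c) = lam / c - lam / (2 * c) := by
          field_simp; ring
        linarith [hψσ]
      · have h := hφball htI (hdist.trans_le (min_le_right _ _))
        simp only [Real.dist_eq, hφσ, sub_zero] at h
        exact h.le
    have hDbound : ∀ t, t ∈ E → t ∈ Icc t0 t1 → |t - σ| ≤ r →
        δ ≤ v t * dotp (p t) (lieBracket F G (q t)) := by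
      intro t htE htI htr
      obtain ⟨hψt, hφt⟩ := hwin t htI htr
      obtain ⟨-, -, ⟨-, hv⟩, -⟩ := htE htI
      have hval : κ / 2 ≤ αf t * dotp (p t) (F (q t)) + βf t * dotp (p t) (G (q t)) := by
        have hψ0 : 0 ≤ dotp (p t) (F (q t)) :=
          le_trans (le_of_lt (div_pos hnormal (by linarith))) hψt
        have ha1 : κ ≤ αf t * dotp (p t) (F (q t)) := by
          rw [hκdef]
          exact mul_le_mul (hα₀le t htI) hψt (le_of_lt (div_pos hnormal (by linarith)))
            (le_trans hα₀pos.le (hα₀le t htI))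
        have ha2 : -(κ / 2) ≤ βf t * dotp (p t) (G (q t)) := by
          have habs : |βf t * dotp (p t) (G (q t))| ≤ max Mβ0 0 * ρ := by
            rw [abs_mul]
            exact mul_le_mul (hMβ t htI) hφt (abs_nonneg _) hMβnn
          have h3 : max Mβ0 0 * ρ ≤ κ / 2 := by
            rw [hρdef, mul_div_assoc']
            rw [div_le_div_iff₀ (by linarith) two_pos]
            nlinarith [hκpos.le, hMβnn]
          linarith [neg_abs_le (βf t * dotp (p t) (G (q t)))]
        linarith
      rw [hcram t htI]
      calc δ = b * (κ / 2) := hδdef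
        _ ≤ v t * (αf t * dotp (p t) (F (q t)) + βf t * dotp (p t) (G (q t))) :=
          mul_le_mul hv.1 hval (by linarith) (by linarith [hv.1])
    refine ⟨r, hrpos, δ, hδpos, ?_, ?_⟩
    · intro y hy hσy hyr
      have hsubI : Icc σ y ⊆ Icc t0 t1 := Icc_subset_Icc hσ.1 hy.2
      have hnull2 : volume (Icc σ y \ E) = 0 :=
        measure_mono_null (diff_subset_diff_left hsubI) hEnull
      have hd' : ∀ x' ∈ E ∩ Icc σ y, HasDerivWithinAt (fun τ => dotp (p τ) (G (q τ)))
          (v x' * dotp (p x') (lieBracket F G (q x'))) (Icc σ y) x' := by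
        intro x' hx'
        exact (hDeriv x' hx'.1 (hsubI hx'.2)).mono hsubI
      have hb' : ∀ x' ∈ E ∩ Icc σ y, δ ≤ v x' * dotp (p x') (lieBracket F G (q x')) := by
        intro x' hx'
        refine hDbound x' hx'.1 (hsubI hx'.2) ?_
        rw [abs_le]
        constructor
        · linarith [hx'.2.1, hrpos]
        · linarith [hx'.2.2, hyr]
      have hgrow := growth_aux hKφ0 hσy.le (hφc.mono hsubI)
        (fun x hx y' hy' => hφlip x (hsubI hx) y' (hsubI hy')) hnull2 hd' hb'
      rw [hφσ] at hgrow
      linarith [hgrow]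
    · intro x hx hxσ hxr
      have hsubI : Icc x σ ⊆ Icc t0 t1 := Icc_subset_Icc hx.1 hσ.2
      have hnull2 : volume (Icc x σ \ E) = 0 :=
        measure_mono_null (diff_subset_diff_left hsubI) hEnull
      have hd' : ∀ x' ∈ E ∩ Icc x σ, HasDerivWithinAt (fun τ => dotp (p τ) (G (q τ)))
          (v x' * dotp (p x') (lieBracket F G (q x'))) (Icc x σ) x' := by
        intro x' hx'
        exact (hDeriv x' hx'.1 (hsubI hx'.2)).mono hsubI
      have hb' : ∀ x' ∈ E ∩ Icc x σ, δ ≤ v x' * dotp (p x') (lieBracket F G (q x')) := by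
        intro x' hx'
        refine hDbound x' hx'.1 (hsubI hx'.2) ?_
        rw [abs_le]
        constructor
        · linarith [hx'.2.1, hxr]
        · linarith [hx'.2.2, hrpos]
      have hgrow := growth_aux hKφ0 hxσ.le (hφc.mono hsubI)
        (fun x' hx' y' hy' => hφlip x' (hsubI hx') y' (hsubI hy')) hnull2 hd' hb'
      rw [hφσ] at hgrow
      linarith [hgrow]
  -- part 2
  have part2 : ∀ τ ∈ Icc t0 t1, dotp (p τ) (G (q τ)) = 0 →
      (∀ t ∈ Ico t0 τ, dotp (p t) (G (q t)) < 0) ∧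
      (∀ t ∈ Ioc τ t1, 0 < dotp (p t) (G (q t))) := by
    intro τ hτ hφτ
    obtain ⟨r, hr, δ, hδ, hright, hleft⟩ := crossing τ hτ hφτ
    constructor
    · -- left of τ : φ < 0
      by_contra hcon
      push_neg at hcon
      obtain ⟨t', ht', hφt'⟩ := hcon
      set Z : Set ℝ := {s : ℝ | s ∈ Ico t0 τ ∧ 0 ≤ dotp (p s) (G (q s))} with hZdef
      have hZne : Z.Nonempty := ⟨t', ht', hφt'⟩
      have hZbdd : BddAbove Z := ⟨τ, fun z hz => hz.1.2.le⟩
      set σ : ℝ := sSup Z with hσdef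
      have hσle : σ ≤ τ := csSup_le hZne (fun z hz => hz.1.2.le)
      have ht'σ : t' ≤ σ := le_csSup hZbdd ⟨ht', hφt'⟩
      have hσI : σ ∈ Icc t0 t1 := ⟨le_trans ht'.1 ht'σ, le_trans hσle hτ.2⟩
      have hστ : σ < τ := by
        rcases lt_or_eq_of_le hσle with h | h
        · exact h
        exfalso
        have hτt' : t' < τ := ht'.2
        have hmin : 0 < min r (τ - t') := lt_min hr (by linarith)
        obtain ⟨z, hzZ, hzgt⟩ := exists_lt_of_lt_csSup hZne
          (show τ - min r (τ - t') < sSup Z by rw [← hσdef, h]; linarith)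
        have hz1 : z < τ := hzZ.1.2
        have hz2 : τ - r ≤ z := by
          have := min_le_left r (τ - t'); linarith
        have hzI : z ∈ Icc t0 t1 := ⟨hzZ.1.1, le_trans hz1.le hτ.2⟩
        have hle := hleft z hzI hz1 hz2
        have hprod : 0 < δ * (τ - z) := mul_pos hδ (by linarith)
        linarith [hzZ.2]
      have hneg : ∀ x, σ < x → x < τ → dotp (p x) (G (q x)) < 0 := by
        intro x hx1 hx2
        by_contra hcc
        push_neg at hcc
        have hxZ : x ∈ Z := ⟨⟨le_trans hσI.1 hx1.le, hx2⟩, hcc⟩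
        exact absurd (le_csSup hZbdd hxZ) (not_le.2 hx1)
      have hφσ0 : dotp (p σ) (G (q σ)) = 0 := by
        have hle : 0 ≤ dotp (p σ) (G (q σ)) := by
          by_contra hcc
          push_neg at hcc
          have hct := hφc σ hσI
          rw [Metric.continuousWithinAt_iff] at hct
          obtain ⟨r', hr', hball⟩ := hct (-(dotp (p σ) (G (q σ)))) (by linarith)
          obtain ⟨z, hzZ, hzgt⟩ := exists_lt_of_lt_csSup hZne
            (show σ - r' < sSup Z by rw [← hσdef]; linarith)
          have hzI : z ∈ Icc t0 t1 := ⟨hzZ.1.1, le_trans hzZ.1.2.le hτ.2⟩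
          have hzle : z ≤ σ := le_csSup hZbdd hzZ
          have hzd : dist z σ < r' := by
            rw [Real.dist_eq, abs_of_nonpos (by linarith)]; linarith
          have hb2 := hball hzI hzd
          simp only [Real.dist_eq] at hb2
          have := (abs_lt.1 hb2).2
          linarith [hzZ.2]
        have hge : dotp (p σ) (G (q σ)) ≤ 0 := by
          by_contra hcc
          push_neg at hcc
          have hct := hφc σ hσI
          rw [Metric.continuousWithinAt_iff] at hct
          obtain ⟨r', hr', hball⟩ := hct (dotp (p σ) (G (q σ))) hcc
          set x : ℝ := min (σ + r' / 2) ((σ + τ) / 2) with hxdef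
          have hx1 : σ < x := lt_min (by linarith) (by linarith)
          have hx2 : x < τ := lt_of_le_of_lt (min_le_right _ _) (by linarith)
          have hxI : x ∈ Icc t0 t1 := ⟨le_trans hσI.1 hx1.le, le_trans hx2.le hτ.2⟩
          have hxd : dist x σ < r' := by
            rw [Real.dist_eq, abs_of_pos (by linarith)]
            have := min_le_left (σ + r' / 2) ((σ + τ) / 2); linarith
          have hb2 := hball hxI hxd
          simp only [Real.dist_eq] at hb2
          have := (abs_lt.1 hb2).1
          exact absurd (hneg x hx1 hx2) (by linarith)
        linarith
      obtain ⟨r2, hr2, δ2, hδ2, hright2, -⟩ := crossing σ hσI hφσ0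
      set y : ℝ := min (σ + r2) ((σ + τ) / 2) with hydef
      have hy1 : σ < y := lt_min (by linarith) (by linarith)
      have hy2 : y < τ := lt_of_le_of_lt (min_le_right _ _) (by linarith)
      have hyI : y ∈ Icc t0 t1 := ⟨le_trans hσI.1 hy1.le, le_trans hy2.le hτ.2⟩
      have hgr := hright2 y hyI hy1 (min_le_left _ _)
      have hyneg := hneg y hy1 hy2
      have hprod : 0 < δ2 * (y - σ) := mul_pos hδ2 (by linarith)
      linarith
    · -- right of τ : φ > 0
      by_contra hcon
      push_neg at hcon
      obtain ⟨t', ht', hφt'⟩ := hcon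
      set Z : Set ℝ := {s : ℝ | s ∈ Ioc τ t1 ∧ dotp (p s) (G (q s)) ≤ 0} with hZdef
      have hZne : Z.Nonempty := ⟨t', ht', hφt'⟩
      have hZbdd : BddBelow Z := ⟨τ, fun z hz => hz.1.1.le⟩
      set σ : ℝ := sInf Z with hσdef
      have hτσ : τ ≤ σ := le_csInf hZne (fun z hz => hz.1.1.le)
      have hσt' : σ ≤ t' := csInf_le hZbdd ⟨ht', hφt'⟩
      have hσI : σ ∈ Icc t0 t1 := ⟨le_trans hτ.1 hτσ, le_trans hσt' ht'.2⟩
      have hστ : τ < σ := by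
        rcases lt_or_eq_of_le hτσ with h | h
        · exact h
        exfalso
        have hτt' : τ < t' := ht'.1
        have hmin : 0 < min r (t' - τ) := lt_min hr (by linarith)
        obtain ⟨z, hzZ, hzlt⟩ := exists_lt_of_csInf_lt hZne
          (show sInf Z < τ + min r (t' - τ) by rw [← hσdef, ← h]; linarith)
        have hz1 : τ < z := hzZ.1.1
        have hz2 : z ≤ τ + r := by
          have := min_le_left r (t' - τ); linarith
        have hzI : z ∈ Icc t0 t1 := ⟨le_trans hτ.1 hz1.le, hzZ.1.2⟩
        have hge := hright z hzI hz1 hz2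
        have hprod : 0 < δ * (z - τ) := mul_pos hδ (by linarith)
        linarith [hzZ.2]
      have hpos : ∀ x, τ < x → x < σ → 0 < dotp (p x) (G (q x)) := by
        intro x hx1 hx2
        by_contra hcc
        push_neg at hcc
        have hxZ : x ∈ Z := ⟨⟨hx1, le_trans hx2.le hσI.2⟩, hcc⟩
        exact absurd (csInf_le hZbdd hxZ) (not_le.2 hx2)
      have hφσ0 : dotp (p σ) (G (q σ)) = 0 := by
        have hle : dotp (p σ) (G (q σ)) ≤ 0 := by
          by_contra hcc
          push_neg at hcc
          have hct := hφc σ hσI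
          rw [Metric.continuousWithinAt_iff] at hct
          obtain ⟨r', hr', hball⟩ := hct (dotp (p σ) (G (q σ))) hcc
          obtain ⟨z, hzZ, hzlt⟩ := exists_lt_of_csInf_lt hZne
            (show sInf Z < σ + r' by rw [← hσdef]; linarith)
          have hzI : z ∈ Icc t0 t1 := ⟨le_trans hτ.1 hzZ.1.1.le, hzZ.1.2⟩
          have hzge : σ ≤ z := csInf_le hZbdd hzZ
          have hzd : dist z σ < r' := by
            rw [Real.dist_eq, abs_of_nonneg (by linarith)]; linarith
          have hb2 := hball hzI hzd
          simp only [Real.dist_eq] at hb2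
          have := (abs_lt.1 hb2).1
          linarith [hzZ.2]
        have hge : 0 ≤ dotp (p σ) (G (q σ)) := by
          by_contra hcc
          push_neg at hcc
          have hct := hφc σ hσI
          rw [Metric.continuousWithinAt_iff] at hct
          obtain ⟨r', hr', hball⟩ := hct (-(dotp (p σ) (G (q σ)))) (by linarith)
          set x : ℝ := max (σ - r' / 2) ((τ + σ) / 2) with hxdef
          have hx1 : x < σ := max_lt (by linarith) (by linarith)
          have hx2 : τ < x := lt_of_lt_of_le (by linarith) (le_max_right _ _)
          have hxI : x ∈ Icc t0 t1 := ⟨le_trans hτ.1 hx2.le, le_trans hx1.le hσI.2⟩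
          have hxd : dist x σ < r' := by
            rw [Real.dist_eq, abs_of_nonpos (by linarith)]
            have := le_max_left (σ - r' / 2) ((τ + σ) / 2); linarith
          have hb2 := hball hxI hxd
          simp only [Real.dist_eq] at hb2
          have := (abs_lt.1 hb2).2
          exact absurd (hpos x hx2 hx1) (by linarith)
        linarith
      obtain ⟨r2, hr2, δ2, hδ2, -, hleft2⟩ := crossing σ hσI hφσ0
      set x : ℝ := max (σ - r2) ((τ + σ) / 2) with hxdef
      have hx1 : x < σ := max_lt (by linarith) (by linarith)
      have hx2 : τ < x := lt_of_lt_of_le (by linarith) (le_max_right _ _)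
      have hxI : x ∈ Icc t0 t1 := ⟨le_trans hτ.1 hx2.le, le_trans hx1.le hσI.2⟩
      have hgl := hleft2 x hxI hx1 (le_max_left _ _)
      have hxpos := hpos x hx2 hx1
      have hprod : 0 < δ2 * (σ - x) := mul_pos hδ2 (by linarith)
      linarith
  refine ⟨?_, part2⟩
  intro τ hτ τ' hτ' hz hz'
  by_contra hne
  rcases lt_or_gt_of_ne hne with h | h
  · have := (part2 τ hτ hz).2 τ' ⟨h, hτ'.2⟩
    rw [hz'] at this
    exact lt_irrefl 0 this
  · have := (part2 τ' hτ' hz').2 τ ⟨h, hτ.2⟩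
    rw [hz] at this
    exact lt_irrefl 0 this
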